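/- Fix positive integers k, T, W, d, n with T ≥ W·d and W ≥ k·n, set U = n, and fix reals ε, δ, α ≥ 0, β ∈ [0,1]. If there exists an (ε,δ)-DP algorithm (under item-level neighbors) for fixed-window freq≥k with window W in the singleton setting on datasets with time horizon T over universe [U] having (α,β)-utility, then there exists an (ε,δ)-DP algorithm for the 1-way marginal problem of dimension d on inputs of at most n vectors having (α,β)-utility. -/

import Mathlib

open Finset

/-- `(ε, δ)`-differential privacy of a randomized algorithm `M`
with respect to the neighboring relation `neighbor`. -/
def IsDP {I O : Type} (neighbor : I → I → Prop) (M : I → PMF O) (ε δ : ℝ) : Prop :=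
  ∀ D D', neighbor D D' → ∀ s : Set O,
    (M D).toOuterMeasure s ≤
      ENNReal.ofReal (Real.exp ε) * (M D').toOuterMeasure s + ENNReal.ofReal δ

/-- `(α, β)`-utility: for every input and every query, with probability at least
`1 - β` the output estimate is within `α` of the true value. -/
def HasUtility {I Q : Type} (M : I → PMF (Q → ℝ)) (val : I → Q → ℝ) (α β : ℝ) : Prop :=
  ∀ D q, ENNReal.ofReal (1 - β) ≤ (M D).toOuterMeasure {o | |o q - val D q| ≤ α}

/-- A dataset with time horizon `T` over universe `[U]`:
`S t u` is the multiplicity of item `u` at (0-indexed) time step `t`. -/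
abbrev Dataset (T U : ℕ) : Type := Fin T → Fin U → ℕ

/-- `S^{[t₁, t₂]}_u` with 1-indexed times: total multiplicity of item `u`
during time steps `t₁, ..., t₂`. -/
def winCount {T U : ℕ} (S : Dataset T U) (t₁ t₂ : ℕ) (u : Fin U) : ℕ :=
  ∑ t : Fin T, if t₁ ≤ (t : ℕ) + 1 ∧ (t : ℕ) + 1 ≤ t₂ then S t u else 0

/-- `freq≥k(S^{[t₁,t₂]})`: the number of items occurring at least `k` times. -/
def freqGe {T U : ℕ} (k : ℕ) (S : Dataset T U) (t₁ t₂ : ℕ) : ℕ :=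
  (Finset.univ.filter fun u : Fin U => k ≤ winCount S t₁ t₂ u).card

/-- `freq=k(S^{[t₁,t₂]})`: the number of items occurring exactly `k` times. -/
def freqEq {T U : ℕ} (k : ℕ) (S : Dataset T U) (t₁ t₂ : ℕ) : ℕ :=
  (Finset.univ.filter fun u : Fin U => winCount S t₁ t₂ u = k).card

/-- Item-level neighbors: the datasets agree on all items except possibly one. -/
def ItemNeighbor {T U : ℕ} (S S' : Dataset T U) : Prop :=
  ∃ u : Fin U, ∀ u' : Fin U, u' ≠ u → ∀ t : Fin T, S t u' = S' t u'

/-- Event-level neighbors: the total (absolute) difference of multiplicities is at most 1. -/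
def EventNeighbor {T U : ℕ} (S S' : Dataset T U) : Prop :=
  (∑ t : Fin T, ∑ u : Fin U, ((S t u : ℤ) - (S' t u : ℤ)).natAbs) ≤ 1

/-- Singleton setting: at most one item arrives at each time step. -/
def IsSingleton {T U : ℕ} (S : Dataset T U) : Prop :=
  ∀ t : Fin T, (∑ u : Fin U, S t u) ≤ 1

/-- Cumulative `freq≥k` queries: the query indexed by `t : Fin T` is
`freq≥k(S^{[1, t+1]})`. -/
def cumVal (k : ℕ) {T U : ℕ} (S : Dataset T U) (t : Fin T) : ℝ :=
  (freqGe k S 1 ((t : ℕ) + 1) : ℝ)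

/-- Time-window `freq≥k` queries: the query indexed by a pair `t₁ ≤ t₂` (0-indexed)
is `freq≥k(S^{[t₁+1, t₂+1]})`. -/
def twVal (k : ℕ) {T U : ℕ} (S : Dataset T U)
    (p : {p : Fin T × Fin T // p.1 ≤ p.2}) : ℝ :=
  (freqGe k S ((p.1.1 : ℕ) + 1) ((p.1.2 : ℕ) + 1) : ℝ)

/-- Time-window `freq=k` queries. -/
def twValEq (k : ℕ) {T U : ℕ} (S : Dataset T U)
    (p : {p : Fin T × Fin T // p.1 ≤ p.2}) : ℝ :=
  (freqEq k S ((p.1.1 : ℕ) + 1) ((p.1.2 : ℕ) + 1) : ℝ)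

/-- Fixed-window `freq≥k` queries with window `W`: the query indexed by
`i : Fin (T - W + 1)` is `freq≥k(S^{[i+1, i+W]})`. -/
def fwVal (k W : ℕ) {T U : ℕ} (S : Dataset T U) (i : Fin (T - W + 1)) : ℝ :=
  (freqGe k S ((i : ℕ) + 1) ((i : ℕ) + W) : ℝ)

/-- Neighboring inputs for range-query-type problems: they differ by adding
or removing a single point. -/
def AddRemoveNeighbor {P : Type} (D D' : Multiset P) : Prop :=
  ∃ x : P, D' = x ::ₘ D ∨ D = x ::ₘ D'

/-- 1d-range queries over a linearly ordered finite domain `Fin M`: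
the query indexed by `y₁ ≤ y₂` counts the points in `[y₁, y₂]`. -/
def range1Val {M : ℕ} (D : Multiset (Fin M))
    (p : {p : Fin M × Fin M // p.1 ≤ p.2}) : ℝ :=
  ((D.filter fun x => p.1.1 ≤ x ∧ x ≤ p.1.2).card : ℝ)

/-- 2d-range queries over the domain `Fin M × Fin M`: the query indexed by a pair
`(y¹, y²)` counts the points `x` with `y¹ ⪯ x ⪯ y²` coordinatewise. -/
def range2Val {M : ℕ} (D : Multiset (Fin M × Fin M))
    (p : (Fin M × Fin M) × (Fin M × Fin M)) : ℝ :=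
  ((D.filter fun x =>
      p.1.1 ≤ x.1 ∧ p.1.2 ≤ x.2 ∧ x.1 ≤ p.2.1 ∧ x.2 ≤ p.2.2).card : ℝ)

/-- Neighboring inputs for the linear query problem: they differ
in a single coordinate. -/
def CoordNeighbor {m : ℕ} (x x' : Fin m → Bool) : Prop :=
  ∃ u : Fin m, ∀ u' : Fin m, u' ≠ u → x u' = x' u'

/-- The `A`-linear queries: the query indexed by `i : Fin d` is `(A x)_i`. -/
def linVal {d m : ℕ} (A : Fin d → Fin m → Bool) (x : Fin m → Bool) (i : Fin d) : ℝ :=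
  ((∑ u : Fin m, if A i u && x u then 1 else 0 : ℕ) : ℝ)

/-- The 1-way marginal queries: the query indexed by `i : Fin d` is the `i`-th
coordinate of the sum of the input vectors. -/
def margVal {d : ℕ} (D : Multiset (Fin d → Bool)) (i : Fin d) : ℝ :=
  (((D.map fun x => if x i then (1 : ℕ) else 0).sum : ℕ) : ℝ)

/-! Assign the at most `n` input vectors to the `n` items by a uniformly random permutation,
padding with zero vectors, and let item `u` arrive `k` times in a row inside the `i`-th block of
`W` time steps iff its vector has a `1` in coordinate `i`. The window aligned with block `i` then
has `freq≥k` equal to the `i`-th marginal, whatever the permutation. Adding a vector to the input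
changes the assignment in a single item, after a relabeling of the permutations that preserves the
uniform distribution, so item-level privacy of the window algorithm transfers to the marginals.
No deterministic assignment of multisets to items has this property, hence the randomization. -/

section Mechanisms

variable {I I₁ O O' Q Q' G : Type}

theorem IsDP.map {nb : I → I → Prop} {M : I → PMF O} {ε δ : ℝ} (hM : IsDP nb M ε δ)
    (f : O → O') : IsDP nb (fun D => (M D).map f) ε δ := fun D D' hDD' s => by
  simpa only [PMF.toOuterMeasure_map_apply] using hM D D' hDD' (f ⁻¹' s)

theorem HasUtility.map_eval {M : I → PMF (Q → ℝ)} {val : I → Q → ℝ} {α β : ℝ}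
    (hM : HasUtility M val α β) (r : Q' → Q) :
    HasUtility (fun D => (M D).map fun o q => o (r q)) (fun D q => val D (r q)) α β :=
  fun D q => by rw [PMF.toOuterMeasure_map_apply]; exact hM D (r q)

theorem IsDP.bind_of_coupling {nb₁ : I₁ → I₁ → Prop} {M : I₁ → PMF O} {ε δ : ℝ}
    (hM : IsDP nb₁ M ε δ) (p : PMF G) (enc : I → G → I₁) {nb : I → I → Prop}
    (hcoupling : ∀ D D', nb D D' →
      ∃ e : G ≃ G, (∀ g, p (e g) = p g) ∧ ∀ g, nb₁ (enc D g) (enc D' (e g))) :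
    IsDP nb (fun D => p.bind fun g => M (enc D g)) ε δ := by
  intro D D' hDD' s
  obtain ⟨e, hp, hnb⟩ := hcoupling D D' hDD'
  simp only [PMF.toOuterMeasure_bind_apply]
  calc ∑' g, p g * (M (enc D g)).toOuterMeasure s
      ≤ ∑' g, (ENNReal.ofReal (Real.exp ε) * (p (e g) * (M (enc D' (e g))).toOuterMeasure s)
          + p g * ENNReal.ofReal δ) := by
        refine ENNReal.tsum_le_tsum fun g => ?_
        rw [hp, mul_left_comm, ← mul_add]
        exact mul_le_mul_right (hM _ _ (hnb g) s) _
    _ = ENNReal.ofReal (Real.exp ε) * ∑' g, p g * (M (enc D' g)).toOuterMeasure s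
          + ENNReal.ofReal δ := by
        rw [ENNReal.tsum_add, ENNReal.tsum_mul_left, ENNReal.tsum_mul_right, PMF.tsum_coe, one_mul,
          e.tsum_eq fun g => p g * (M (enc D' g)).toOuterMeasure s]

theorem HasUtility.bind {M : I₁ → PMF (Q → ℝ)} {val₁ : I₁ → Q → ℝ} {α β : ℝ}
    (hM : HasUtility M val₁ α β) (p : PMF G) (enc : I → G → I₁) {val : I → Q → ℝ}
    (hval : ∀ D g, val₁ (enc D g) = val D) :
    HasUtility (fun D => p.bind fun g => M (enc D g)) val α β := by
  intro D q
  rw [PMF.toOuterMeasure_bind_apply]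
  calc ENNReal.ofReal (1 - β) = ∑' g, p g * ENNReal.ofReal (1 - β) := by
        rw [ENNReal.tsum_mul_right, PMF.tsum_coe, one_mul]
    _ ≤ _ := ENNReal.tsum_le_tsum fun g => mul_le_mul_right (hval D g ▸ hM (enc D g) q) _

end Mechanisms

theorem div_eq_and_mod_div_eq_iff {t W k i u : ℕ} (hk : 0 < k) (hu : u * k + k ≤ W) :
    t / W = i ∧ t % W / k = u ↔ i * W + u * k ≤ t ∧ t < i * W + u * k + k := by
  constructor
  · rintro ⟨rfl, rfl⟩
    have h1 := Nat.div_add_mod t W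
    have h2 := Nat.div_add_mod (t % W) k
    have h3 := Nat.mod_lt (t % W) hk
    rw [mul_comm] at h1 h2
    omega
  · rintro ⟨h1, h2⟩
    have hi : t / W = i := Nat.div_eq_of_lt_le (by omega) (by rw [add_mul, one_mul]; omega)
    have := Nat.div_add_mod t W
    rw [hi, mul_comm] at this
    exact ⟨hi, Nat.div_eq_of_lt_le (by omega) (by rw [add_mul, one_mul]; omega)⟩

theorem card_filter_fin_le_lt {T a k : ℕ} (h : a + k ≤ T) :
    #{t : Fin T | a ≤ t ∧ (t : ℕ) < a + k} = k := by
  rw [Finset.card_filter,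
    Fin.sum_univ_eq_sum_range (fun t => if a ≤ t ∧ t < a + k then 1 else 0),
    ← Finset.card_filter]
  have : (Finset.range T).filter (fun t => a ≤ t ∧ t < a + k) = Finset.Ico a (a + k) := by
    ext t; simp only [Finset.mem_filter, Finset.mem_range, Finset.mem_Ico]; omega
  rw [this, Nat.card_Ico, Nat.add_sub_cancel_left]

theorem Fin.val_mul_lt_sub_add_one {W T d : ℕ} (hT : W * d ≤ T) (i : Fin d) :
    (i : ℕ) * W < T - W + 1 := by
  have : ((i : ℕ) + 1) * W ≤ d * W := Nat.mul_le_mul_right W i.isLt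
  rw [add_mul, one_mul, mul_comm d] at this
  omega

theorem ItemNeighbor.symm {T U : ℕ} {S S' : Dataset T U} (h : ItemNeighbor S S') :
    ItemNeighbor S' S :=
  let ⟨u, hu⟩ := h
  ⟨u, fun u' hu' t => (hu u' hu' t).symm⟩

section Encoding

variable (k W T : ℕ) {n d : ℕ}

/-- Time step `i * W + u * k + r` with `r < k` carries item `u` iff `b u i`. -/
def encode (b : Fin n → Fin d → Bool) : Dataset T n := fun t u =>
  if h : (t : ℕ) / W < d then
    if (t : ℕ) % W / k = u ∧ b u ⟨(t : ℕ) / W, h⟩ then 1 else 0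
  else 0

variable {k W T}

theorem isSingleton_encode (b : Fin n → Fin d → Bool) : IsSingleton (encode k W T b) := by
  intro t
  calc ∑ u, encode k W T b t u ≤ ∑ u : Fin n, if (t : ℕ) % W / k = u then 1 else 0 := by
        refine Finset.sum_le_sum fun u _ => ?_
        unfold encode
        split_ifs <;> simp_all
    _ ≤ 1 := by
        rw [Finset.sum_boole, Nat.cast_id, Finset.card_le_one]
        intro a ha b hb
        simp only [Finset.mem_filter] at ha hb
        exact Fin.ext (ha.2.symm.trans hb.2)

theorem itemNeighbor_encode_update (b : Fin n → Fin d → Bool)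
    (u : Fin n) (c : Fin d → Bool) :
    ItemNeighbor (encode k W T b) (encode k W T (Function.update b u c)) :=
  ⟨u, fun u' hu' t => by simp only [encode, Function.update_of_ne hu']⟩

theorem winCount_encode (hk : 0 < k) (hWkn : k * n ≤ W) (hT : W * d ≤ T)
    (b : Fin n → Fin d → Bool) (i : Fin d) (u : Fin n) :
    winCount (encode k W T b) (i * W + 1) (i * W + W) u = if b u i then k else 0 := by
  have hu : u * k + k ≤ W := by nlinarith [u.isLt]
  have hsummand (t : Fin T) :
      (if i * W + 1 ≤ (t : ℕ) + 1 ∧ (t : ℕ) + 1 ≤ i * W + W then encode k W T b t u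
        else 0)
        = if b u i then (if i * W + u * k ≤ t ∧ (t : ℕ) < i * W + u * k + k then 1 else 0)
          else 0 := by
    have hdiv := Nat.div_add_mod t W
    have hmod := Nat.mod_lt t (show 0 < W by omega)
    rw [mul_comm] at hdiv
    by_cases hti : (t : ℕ) / W = i
    · rw [hti] at hdiv
      rw [if_pos (by omega)]
      have hblock : (⟨(t : ℕ) / W, hti ▸ i.isLt⟩ : Fin d) = i := Fin.ext hti
      have hitem :
          (t : ℕ) % W / k = u ↔ i * W + u * k ≤ t ∧ (t : ℕ) < i * W + u * k + k :=
        (and_iff_right hti).symm.trans (div_eq_and_mod_div_eq_iff hk hu)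
      simp only [encode, dif_pos (hti ▸ i.isLt), hblock, hitem]
      by_cases hb : b u i <;> simp [hb]
    · have hwindow : ¬(i * W + 1 ≤ (t : ℕ) + 1 ∧ (t : ℕ) + 1 ≤ i * W + W) := fun hw =>
        hti (Nat.div_eq_of_lt_le (by omega) (by rw [add_mul, one_mul]; omega))
      have hrun : ¬(i * W + u * k ≤ t ∧ (t : ℕ) < i * W + u * k + k) := fun hr =>
        hti ((div_eq_and_mod_div_eq_iff hk hu).2 hr).1
      rw [if_neg hwindow, if_neg hrun, ite_self]
  rw [winCount, Finset.sum_congr rfl fun t _ => hsummand t]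
  split_ifs
  · rw [Finset.sum_boole, Nat.cast_id, card_filter_fin_le_lt]
    nlinarith [i.isLt]
  · simp

theorem freqGe_encode (hk : 0 < k) (hWkn : k * n ≤ W) (hT : W * d ≤ T)
    (b : Fin n → Fin d → Bool) (i : Fin d) :
    freqGe k (encode k W T b) (i * W + 1) (i * W + W) = #{u | b u i} := by
  unfold freqGe
  congr 1
  refine Finset.filter_congr fun u _ => ?_
  rw [winCount_encode hk hWkn hT]
  split_ifs <;> simp_all [Nat.pos_iff_ne_zero]

end Encoding

theorem Multiset.sum_map_boole {α : Type} (p : α → Prop) [DecidablePred p] (D : Multiset α) :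
    (D.map fun x => if p x then 1 else 0).sum = D.countP p := by
  induction D using Multiset.induction_on with
  | empty => simp
  | cons x D ih => by_cases hx : p x <;> simp [hx, ih, add_comm]

section Padding

variable {V : Type} {n : ℕ}

theorem exists_perm_comp_eq_of_map_univ_eq {ι : Type} [Fintype ι] {f g : ι → V}
    (h : univ.val.map f = univ.val.map g) : ∃ σ : Equiv.Perm ι, g ∘ σ = f := by
  classical
  have hfiber (c : V) : Fintype.card {a // f a = c} = Fintype.card {a // g a = c} := by
    simpa [Multiset.count_map, Fintype.card_subtype, Finset.card_def, Finset.filter_val, eq_comm]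
      using congrArg (Multiset.count c) h
  exact ⟨Equiv.ofFiberEquiv fun c => Fintype.equivOfCardEq (hfiber c),
    funext (Equiv.ofFiberEquiv_map _)⟩

theorem map_univ_getD (z : V) {L : List V} (hL : L.length ≤ n) :
    (univ : Finset (Fin n)).val.map (fun v : Fin n => L.getD v z)
      = ↑L + Multiset.replicate (n - L.length) z := by
  rw [Fin.univ_val_map, ← Multiset.coe_replicate, Multiset.coe_add]
  congr 1
  refine List.ext_getElem (by simp; omega) fun j h₁ h₂ => ?_
  simp only [List.getElem_ofFn, List.getElem_append, List.getElem_replicate]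
  split_ifs with hj
  · exact List.getD_eq_getElem _ _ hj
  · exact List.getD_eq_default _ _ (by omega)

noncomputable def padAssign (n : ℕ) (z : V) (D : Multiset V) : Fin n → V :=
  fun v => D.toList.getD v z

theorem map_univ_padAssign (z : V) {D : Multiset V} (hD : Multiset.card D ≤ n) :
    univ.val.map (padAssign n z D) = D + Multiset.replicate (n - Multiset.card D) z := by
  unfold padAssign
  rw [map_univ_getD z (by simpa using hD), Multiset.coe_toList, Multiset.length_toList]

theorem exists_padAssign_cons_comp_perm_eq_update (z x : V) {D : Multiset V}
    (hD : Multiset.card (x ::ₘ D) ≤ n) :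
    ∃ σ : Equiv.Perm (Fin n), ∃ j,
      padAssign n z (x ::ₘ D) ∘ σ = Function.update (padAssign n z D) j x := by
  rw [Multiset.card_cons] at hD
  have hlen : D.toList.length < n := by rw [Multiset.length_toList]; omega
  have happend : Function.update (padAssign n z D) ⟨_, hlen⟩ x
      = fun v : Fin n => (D.toList ++ [x]).getD v z := by
    funext v
    rcases lt_trichotomy (v : ℕ) D.toList.length with hv | hv | hv
    · rw [Function.update_of_ne (Fin.ne_of_val_ne hv.ne), padAssign, List.getD_append _ _ _ _ hv]
    · rw [show v = ⟨_, hlen⟩ from Fin.ext hv, Function.update_self]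
      simp
    · rw [Function.update_of_ne (Fin.ne_of_val_ne hv.ne'), padAssign,
        List.getD_eq_default _ _ hv.le,
        List.getD_eq_default _ _ (by rw [List.length_append, List.length_singleton]; omega)]
  have hmap : univ.val.map (Function.update (padAssign n z D) ⟨_, hlen⟩ x)
      = univ.val.map (padAssign n z (x ::ₘ D)) := by
    rw [happend, map_univ_getD z (by simp; omega), map_univ_padAssign z (by simp; omega),
      ← Multiset.coe_add, Multiset.coe_toList, Multiset.coe_singleton, List.length_append,
      List.length_singleton, Multiset.length_toList, Multiset.card_cons, add_comm D,
      Multiset.singleton_add, Multiset.cons_add]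
  obtain ⟨σ, hσ⟩ := exists_perm_comp_eq_of_map_univ_eq hmap
  exact ⟨σ, _, hσ⟩

theorem exists_equiv_padAssign_cons_comp_eq_update (z x : V) {D : Multiset V}
    (hD : Multiset.card (x ::ₘ D) ≤ n) :
    ∃ e : Equiv.Perm (Fin n) ≃ Equiv.Perm (Fin n), ∀ π, ∃ u,
      padAssign n z (x ::ₘ D) ∘ e π = Function.update (padAssign n z D ∘ π) u x := by
  obtain ⟨σ, j, hσ⟩ := exists_padAssign_cons_comp_perm_eq_update z x hD
  refine ⟨Equiv.mulLeft σ, fun π => ⟨π.symm j, ?_⟩⟩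
  rw [Equiv.coe_mulLeft, Equiv.Perm.coe_mul, ← Function.comp_assoc, hσ,
    Function.update_comp_equiv]

theorem card_filter_padAssign_comp (p : V → Prop) [DecidablePred p] {z : V} (hz : ¬p z)
    {D : Multiset V} (hD : Multiset.card D ≤ n) (π : Equiv.Perm (Fin n)) :
    #{u | p (padAssign n z D (π u))} = D.countP p := by
  have hmap : univ.val.map (fun u => padAssign n z D (π u))
      = D + Multiset.replicate (n - Multiset.card D) z := by
    rw [← Function.comp_def, ← Multiset.map_map, Multiset.map_univ_val_equiv,
      map_univ_padAssign z hD]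
  rw [Finset.card_def, Finset.filter_val, ← Multiset.countP_map, hmap, Multiset.countP_add,
    (Multiset.countP_eq_zero (s := Multiset.replicate _ z)).2
      fun a ha => Multiset.eq_of_mem_replicate ha ▸ hz, add_zero]

end Padding

theorem exists_equiv_itemNeighbor_encode_padAssign_cons (k W T : ℕ) {n d : ℕ}
    (z x : Fin d → Bool)
    {D : Multiset (Fin d → Bool)} (hD : Multiset.card (x ::ₘ D) ≤ n) :
    ∃ e : Equiv.Perm (Fin n) ≃ Equiv.Perm (Fin n), ∀ π : Equiv.Perm (Fin n),
      ItemNeighbor (encode k W T (padAssign n z D ∘ π))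
        (encode k W T (padAssign n z (x ::ₘ D) ∘ e π)) := by
  obtain ⟨e, he⟩ := exists_equiv_padAssign_cons_comp_eq_update z x hD
  refine ⟨e, fun π => ?_⟩
  obtain ⟨u, hu⟩ := he π
  rw [hu]
  exact itemNeighbor_encode_update _ u x

theorem marginal_from_fixed_window_singleton_general (k T W d n : ℕ)
    (hk : 0 < k) (hT : W * d ≤ T) (hWkn : k * n ≤ W)
    (ε δ α β : ℝ)
    (h : ∃ M₁ : {S : Dataset T n // IsSingleton S} → PMF (Fin (T - W + 1) → ℝ),
      IsDP (fun S S' => ItemNeighbor S.1 S'.1) M₁ ε δ ∧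
      HasUtility M₁ (fun S => fwVal k W S.1) α β) :
    ∃ M₂ : {D : Multiset (Fin d → Bool) // Multiset.card D ≤ n} → PMF (Fin d → ℝ),
      IsDP (fun D D' => AddRemoveNeighbor D.1 D'.1) M₂ ε δ ∧
      HasUtility M₂ (fun D => margVal D.1) α β := by
  obtain ⟨M₁, hDP, hU⟩ := h
  let enc (D : {D : Multiset (Fin d → Bool) // Multiset.card D ≤ n}) (π : Equiv.Perm (Fin n)) :
      {S : Dataset T n // IsSingleton S} :=
    ⟨encode k W T (padAssign n (fun _ => false) D.1 ∘ π), isSingleton_encode _⟩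
  let block (i : Fin d) : Fin (T - W + 1) := ⟨i * W, Fin.val_mul_lt_sub_add_one hT i⟩
  refine ⟨fun D => (PMF.uniformOfFintype _).bind fun π =>
      (M₁ (enc D π)).map fun o i => o (block i), ?_, ?_⟩
  · refine (hDP.map _).bind_of_coupling _ enc fun D D' ⟨x, hx⟩ => ?_
    rcases hx with hx | hx
    · obtain ⟨e, he⟩ := exists_equiv_itemNeighbor_encode_padAssign_cons k W T
        (fun _ => false) x (hx ▸ D'.2)
      exact ⟨e, fun _ => by simp, fun π => by simpa [enc, hx] using he π⟩
    · obtain ⟨e, he⟩ := exists_equiv_itemNeighbor_encode_padAssign_cons k W T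
        (fun _ => false) x (hx ▸ D.2)
      refine ⟨e.symm, fun _ => by simp, fun π => ?_⟩
      simpa [enc, hx] using (he (e.symm π)).symm
  · refine (hU.map_eval block).bind _ enc fun D π => funext fun i => ?_
    simp only [fwVal, block, enc, freqGe_encode hk hWkn hT, Function.comp_apply,
      card_filter_padAssign_comp (fun x : Fin d → Bool => x i = true) (z := fun _ => false)
        Bool.false_ne_true D.2,
      margVal, Multiset.sum_map_boole]

/-- with `T ≥ W·d`, `W ≥ k·n` and `U = n`, an item-level DP
algorithm for fixed-window `freq≥k` in the singleton setting yields a DP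
algorithm for the 1-way marginal problem of dimension `d` on at most `n`
vectors. -/
theorem marginal_from_fixed_window_singleton (k T W d n : ℕ)
    (hk : 0 < k) (hW : 0 < W) (hd : 0 < d) (hn : 0 < n)
    (hT : W * d ≤ T) (hWkn : k * n ≤ W)
    (ε δ α β : ℝ) (hε : 0 ≤ ε) (hδ : 0 ≤ δ) (hα : 0 ≤ α) (hβ0 : 0 ≤ β) (hβ1 : β ≤ 1)
    (h : ∃ M₁ : {S : Dataset T n // IsSingleton S} → PMF (Fin (T - W + 1) → ℝ),
      IsDP (fun S S' => ItemNeighbor S.1 S'.1) M₁ ε δ ∧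
      HasUtility M₁ (fun S => fwVal k W S.1) α β) :
    ∃ M₂ : {D : Multiset (Fin d → Bool) // Multiset.card D ≤ n} → PMF (Fin d → ℝ),
      IsDP (fun D D' => AddRemoveNeighbor D.1 D'.1) M₂ ε δ ∧
      HasUtility M₂ (fun D => margVal D.1) α β :=
  marginal_from_fixed_window_singleton_general k T W d n hk hT hWkn ε δ α β h
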